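/- The Jacobi theta constants satisfy θ₂(τ)⁴ + θ₄(τ)⁴ = θ₃(τ)⁴ for all τ in the upper half plane. -/

import Mathlib

open Complex

/-- Theta constant `θ₂(τ) = ∑_{n∈ℤ} q^{(n+1/2)²/2} = ∑_{n∈ℤ} e^{πiτ(n+1/2)²}`. -/
noncomputable def theta2 (τ : ℂ) : ℂ :=
  ∑' n : ℤ, Complex.exp (Real.pi * Complex.I * τ * ((n : ℂ) + 1 / 2) ^ 2)

/-- Theta constant `θ₃(τ) = ∑_{n∈ℤ} q^{n²/2} = ∑_{n∈ℤ} e^{πiτn²}`. -/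
noncomputable def theta3 (τ : ℂ) : ℂ :=
  ∑' n : ℤ, Complex.exp (Real.pi * Complex.I * τ * (n : ℂ) ^ 2)

/-- Theta constant `θ₄(τ) = ∑_{n∈ℤ} (−1)ⁿ q^{n²/2}`. -/
noncomputable def theta4 (τ : ℂ) : ℂ :=
  ∑' n : ℤ, (-1 : ℂ) ^ n * Complex.exp (Real.pi * Complex.I * τ * (n : ℂ) ^ 2)

/-!
Pairing `(m, n) ↦ (m + n, m - n)` writes a product of two theta series at `τ` as a sum of
products at `2τ`, the parity of `m - n` selecting the characteristics. This gives
`θ₃(τ)² = θ₃(2τ)² + θ₂(2τ)²` and `θ₂(τ)² = 2 θ₂(2τ) θ₃(2τ)`; since `θ₄(τ) = θ₃(τ + 1)` and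
`θ₂(τ + 2) = i θ₂(τ)`, also `θ₄(τ)² = θ₃(2τ)² - θ₂(2τ)²`. Hence
`θ₃⁴ - θ₄⁴ = 4 θ₂(2τ)² θ₃(2τ)² = θ₂⁴`.
-/

open Real

noncomputable def thetaCharTerm (a τ : ℂ) (n : ℤ) : ℂ :=
  cexp (π * I * τ * ((n : ℂ) + a) ^ 2)

noncomputable def thetaChar (a τ : ℂ) : ℂ :=
  ∑' n : ℤ, thetaCharTerm a τ n

lemma theta2_eq_thetaChar (τ : ℂ) : theta2 τ = thetaChar (1 / 2) τ := rfl

lemma theta3_eq_thetaChar (τ : ℂ) : theta3 τ = thetaChar 0 τ := by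
  simp only [theta3, thetaChar, thetaCharTerm, add_zero]

lemma thetaCharTerm_eq_mul_jacobiTheta₂_term (a τ : ℂ) (n : ℤ) :
    thetaCharTerm a τ n = cexp (π * I * τ * a ^ 2) * jacobiTheta₂_term n (a * τ) τ := by
  rw [thetaCharTerm, jacobiTheta₂_term, ← Complex.exp_add]
  ring_nf

lemma summable_norm_thetaCharTerm (a : ℂ) {τ : ℂ} (hτ : 0 < τ.im) :
    Summable fun n : ℤ => ‖thetaCharTerm a τ n‖ := by
  simp only [thetaCharTerm_eq_mul_jacobiTheta₂_term]
  exact summable_norm_iff.2 (((summable_jacobiTheta₂_term_iff _ _).2 hτ).mul_left _)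

lemma thetaChar_add_one (a τ : ℂ) : thetaChar (a + 1) τ = thetaChar a τ := by
  conv_rhs => rw [thetaChar, ← (Equiv.addRight 1).tsum_eq]
  refine tsum_congr fun n => ?_
  simp only [thetaCharTerm, Equiv.coe_addRight, Int.cast_add, Int.cast_one, add_assoc,
    add_comm (1 : ℂ)]

lemma thetaChar_add_two {a : ℂ} {k : ℤ} (hk : 2 * a = k) (τ : ℂ) :
    thetaChar a (τ + 2) = cexp (2 * π * I * a ^ 2) * thetaChar a τ := by
  rw [thetaChar, thetaChar, ← tsum_mul_left]
  refine tsum_congr fun n => ?_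
  have hexp : π * I * (τ + 2) * ((n : ℂ) + a) ^ 2 = 2 * π * I * a ^ 2 +
      π * I * τ * ((n : ℂ) + a) ^ 2 + ((n ^ 2 + n * k : ℤ) : ℂ) * (2 * π * I) := by
    push_cast
    rw [← hk]
    ring
  rw [thetaCharTerm, thetaCharTerm, hexp, Complex.exp_add, Complex.exp_add,
    exp_int_mul_two_pi_mul_I, mul_one]

lemma theta3_add_two (τ : ℂ) : theta3 (τ + 2) = theta3 τ := by
  simpa [theta3_eq_thetaChar] using thetaChar_add_two (a := 0) (k := 0) (by simp) τ

lemma theta2_add_two (τ : ℂ) : theta2 (τ + 2) = I * theta2 τ := by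
  have hI : cexp (2 * π * I * (1 / 2) ^ 2) = I := by
    rw [show 2 * π * I * (1 / 2) ^ 2 = π / 2 * I by ring, exp_pi_div_two_mul_I]
  simpa only [theta2_eq_thetaChar, hI] using thetaChar_add_two (a := 1 / 2) (k := 1) (by simp) τ

lemma exp_pi_mul_I_mul_int_sq (n : ℤ) : cexp (π * I * (n : ℂ) ^ 2) = (-1) ^ n := by
  obtain ⟨k, hk⟩ := Int.even_mul_pred_self n
  have hexp : π * I * (n : ℂ) ^ 2 = n * (π * I) + k * (2 * π * I) := by
    have hk' : (n : ℂ) * (n - 1) = k + k := by exact_mod_cast hk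
    linear_combination π * I * hk'
  rw [hexp, Complex.exp_add, exp_int_mul_two_pi_mul_I, Complex.exp_int_mul, exp_pi_mul_I, mul_one]

lemma theta4_eq_theta3_add_one (τ : ℂ) : theta4 τ = theta3 (τ + 1) := by
  refine tsum_congr fun n => ?_
  rw [mul_add, add_mul, mul_one, Complex.exp_add, exp_pi_mul_I_mul_int_sq, mul_comm]

/-- Every `(m, n) : ℤ × ℤ` is uniquely `(k + l + ε, k - l)` with `ε ∈ {0, 1}` the parity of
`m - n`. -/
@[simps]
def intPairParityEquiv : (ℤ × ℤ) ⊕ (ℤ × ℤ) ≃ ℤ × ℤ where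
  toFun := Sum.elim (fun p => (p.1 + p.2, p.1 - p.2)) (fun p => (p.1 + p.2 + 1, p.1 - p.2))
  invFun p :=
    if (p.1 - p.2) % 2 = 0 then .inl (p.2 + (p.1 - p.2) / 2, (p.1 - p.2) / 2)
    else .inr (p.2 + (p.1 - p.2) / 2, (p.1 - p.2) / 2)
  left_inv := by
    rintro (⟨k, l⟩ | ⟨k, l⟩)
    · have h : (k + l - (k - l)) % 2 = 0 := by omega
      simp only [Sum.elim_inl, h, if_true, Sum.inl.injEq, Prod.mk.injEq]
      omega
    · have h : (k + l + 1 - (k - l)) % 2 ≠ 0 := by omega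
      simp only [Sum.elim_inr, h, if_false, Sum.inr.injEq, Prod.mk.injEq]
      omega
  right_inv := by
    rintro ⟨m, n⟩
    dsimp only
    split_ifs <;> simp only [Sum.elim_inl, Sum.elim_inr, Prod.mk.injEq] <;> omega

lemma thetaCharTerm_mul_thetaCharTerm (a b τ : ℂ) (k l ε : ℤ) :
    thetaCharTerm a τ (k + l + ε) * thetaCharTerm b τ (k - l) =
      thetaCharTerm ((a + b + ε) / 2) (2 * τ) k * thetaCharTerm ((a - b + ε) / 2) (2 * τ) l := by
  simp only [thetaCharTerm, ← Complex.exp_add]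
  congr 1
  push_cast
  ring

theorem thetaChar_mul_thetaChar (a b : ℂ) {τ : ℂ} (hτ : 0 < τ.im) :
    thetaChar a τ * thetaChar b τ =
      thetaChar ((a + b) / 2) (2 * τ) * thetaChar ((a - b) / 2) (2 * τ) +
        thetaChar ((a + b + 1) / 2) (2 * τ) * thetaChar ((a - b + 1) / 2) (2 * τ) := by
  have hτ₂ : 0 < (2 * τ).im := by simpa using hτ
  have hsum : Summable fun c => thetaCharTerm a τ (intPairParityEquiv c).1 *
      thetaCharTerm b τ (intPairParityEquiv c).2 :=
    intPairParityEquiv.summable_iff.2 <| summable_mul_of_summable_norm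
      (summable_norm_thetaCharTerm a hτ) (summable_norm_thetaCharTerm b hτ)
  rw [thetaChar, thetaChar, tsum_mul_tsum_of_summable_norm (summable_norm_thetaCharTerm a hτ)
    (summable_norm_thetaCharTerm b hτ), ← intPairParityEquiv.tsum_eq,
    Summable.tsum_sum (hsum.comp_injective Sum.inl_injective)
      (hsum.comp_injective Sum.inr_injective)]
  simp only [thetaChar, tsum_mul_tsum_of_summable_norm (summable_norm_thetaCharTerm _ hτ₂)
    (summable_norm_thetaCharTerm _ hτ₂)]
  congr 1 <;> refine tsum_congr fun p => ?_
  · simpa using thetaCharTerm_mul_thetaCharTerm a b τ p.1 p.2 0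
  · simpa using thetaCharTerm_mul_thetaCharTerm a b τ p.1 p.2 1

lemma theta3_sq {τ : ℂ} (hτ : 0 < τ.im) :
    theta3 τ ^ 2 = theta3 (2 * τ) ^ 2 + theta2 (2 * τ) ^ 2 := by
  simpa [sq, theta3_eq_thetaChar, theta2_eq_thetaChar] using thetaChar_mul_thetaChar 0 0 hτ

lemma theta2_sq {τ : ℂ} (hτ : 0 < τ.im) :
    theta2 τ ^ 2 = 2 * theta2 (2 * τ) * theta3 (2 * τ) := by
  have h := thetaChar_mul_thetaChar (1 / 2) (1 / 2) hτ
  have h₁ : thetaChar 1 (2 * τ) = thetaChar 0 (2 * τ) := by simpa using thetaChar_add_one 0 (2 * τ)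
  norm_num [h₁] at h
  rw [theta2_eq_thetaChar, theta2_eq_thetaChar, theta3_eq_thetaChar]
  linear_combination h

lemma theta4_sq {τ : ℂ} (hτ : 0 < τ.im) :
    theta4 τ ^ 2 = theta3 (2 * τ) ^ 2 - theta2 (2 * τ) ^ 2 := by
  rw [theta4_eq_theta3_add_one, theta3_sq (by simpa using hτ), mul_add, mul_one, theta3_add_two,
    theta2_add_two, mul_pow, I_sq]
  ring

/-- Jacobi's identity `θ₂(τ)⁴ + θ₄(τ)⁴ = θ₃(τ)⁴` on the upper half plane. -/
theorem jacobi_theta_fourth_power_identity (τ : ℂ) (hτ : 0 < τ.im) :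
    theta2 τ ^ 4 + theta4 τ ^ 4 = theta3 τ ^ 4 := by
  linear_combination (theta2 τ ^ 2 + 2 * theta2 (2 * τ) * theta3 (2 * τ)) * theta2_sq hτ +
    (theta4 τ ^ 2 + theta3 (2 * τ) ^ 2 - theta2 (2 * τ) ^ 2) * theta4_sq hτ -
    (theta3 τ ^ 2 + theta3 (2 * τ) ^ 2 + theta2 (2 * τ) ^ 2) * theta3_sq hτ
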